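/- Let C ⊆ F₂ⁿ be a linear code, let e ∈ F₂ⁿ, and let p be a real number with 0 < p < 1. Then Σ_{y ∈ C^⊥} (1−p)^{n − wt(e+y)} p^{wt(e+y)} = (1/|C|) · Σ_{z ∈ C} (−1)^{⟨e,z⟩} (1−2p)^{wt(z)}. -/

import Mathlib

/-- Hamming weight of an `F₂`-vector. -/
def wt {n : ℕ} (x : Fin n → ZMod 2) : ℕ :=
  (Finset.univ.filter fun i => x i ≠ 0).card

/-- The `F₂` inner product `⟨x, z⟩ = Σᵢ xᵢ zᵢ`. -/
def dot {n : ℕ} (x z : Fin n → ZMod 2) : ZMod 2 := ∑ i, x i * z i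

/-- `(−1)^{⟨x,z⟩}`: `1` if `⟨x,z⟩ = 0` and `−1` otherwise. -/
def sgn {n : ℕ} (x z : Fin n → ZMod 2) : ℝ := if dot x z = 0 then 1 else -1

/-!
Poisson summation over `F₂ⁿ`. Summing the character `z ↦ (-1)^⟨y, z⟩` over `C` gives `|C|` if
`y ∈ C^⊥` and `0` otherwise, so `|C|` times the left-hand side is
`Σ_y Σ_{z ∈ C} (-1)^⟨y, z⟩ P(e + y)`, where `P` is the channel's product distribution on error
patterns. Since `P` is a product, its Walsh transform factorizes over the coordinates:
`Σ_x (-1)^⟨x, z⟩ P(x) = (1 - 2p)^{wt z}`, and the shift by `e` contributes the sign `(-1)^⟨e, z⟩`.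
-/

open Finset Matrix

lemma AddChar.map_sum_eq_prod {ι A M : Type*} [AddCommMonoid A] [CommMonoid M]
    (ψ : AddChar A M) (s : Finset ι) (f : ι → A) : ψ (∑ i ∈ s, f i) = ∏ i ∈ s, ψ (f i) := by
  induction s using Finset.cons_induction with
  | empty => simp
  | cons a s ha ih => rw [sum_cons, prod_cons, AddChar.map_add_eq_mul, ih]

lemma ZMod.two_cases (a : ZMod 2) : a = 0 ∨ a = 1 := by
  revert a; decide

def signChar : AddChar (ZMod 2) ℝ where
  toFun a := if a = 0 then 1 else -1
  map_zero_eq_one' := if_pos rfl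
  map_add_eq_mul' a b := by
    rcases a.two_cases with rfl | rfl <;> rcases b.two_cases with rfl | rfl <;>
      simp [show (1 : ZMod 2) + 1 = 0 from rfl]

lemma signChar_eq_one_iff {a : ZMod 2} : signChar a = 1 ↔ a = 0 := by
  rcases a.two_cases with rfl | rfl <;> norm_num [signChar]

lemma sgn_eq_signChar {n : ℕ} (x z : Fin n → ZMod 2) : sgn x z = signChar (x ⬝ᵥ z) := rfl

lemma dot_eq_dotProduct {n : ℕ} (x z : Fin n → ZMod 2) : dot x z = x ⬝ᵥ z := rfl

section Orthogonality

variable {ι : Type*} [Fintype ι] (C : Submodule (ZMod 2) (ι → ZMod 2)) (w : ι → ZMod 2)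

def dualChar : AddChar C ℝ :=
  signChar.compAddMonoidHom
    ((dotProductBilin (ZMod 2) (ZMod 2) w).toAddMonoidHom.comp C.subtype.toAddMonoidHom)

lemma dualChar_apply (z : C) : dualChar C w z = signChar (w ⬝ᵥ z) := rfl

lemma dualChar_eq_zero_iff : dualChar C w = 0 ↔ ∀ z ∈ C, w ⬝ᵥ z = 0 := by
  simp [AddChar.eq_zero_iff, dualChar_apply, signChar_eq_one_iff]

lemma sum_signChar_dotProduct_mem [DecidableEq ι] [DecidablePred (· ∈ C)]
    [Decidable (∀ z ∈ C, w ⬝ᵥ z = 0)] :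
    ∑ z ∈ univ.filter (· ∈ C), signChar (w ⬝ᵥ z) =
      if ∀ z ∈ C, w ⬝ᵥ z = 0 then (Nat.card C : ℝ) else 0 := by
  rw [sum_subtype (p := (· ∈ C)) _ (fun _ ↦ by simp)]
  simp_rw [← dualChar_apply]
  rw [AddChar.sum_eq_ite, Nat.card_eq_fintype_card]
  simp only [dualChar_eq_zero_iff]

end Orthogonality

/-- The probability that the binary symmetric channel with crossover probability `p` adds the
error bit `b`. -/
def flipProb (p : ℝ) (b : ZMod 2) : ℝ := if b = 0 then 1 - p else p

lemma sum_signChar_mul_flipProb (p : ℝ) (c : ZMod 2) :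
    ∑ b, signChar (b * c) * flipProb p b = if c = 0 then 1 else 1 - 2 * p := by
  rw [show (univ : Finset (ZMod 2)) = {0, 1} from rfl, sum_pair zero_ne_one]
  rcases c.two_cases with rfl | rfl
  · norm_num [signChar, flipProb]
  · norm_num [signChar, flipProb]
    ring

lemma sum_signChar_dotProduct_mul_prod_flipProb {ι : Type*} [Fintype ι] [DecidableEq ι]
    (p : ℝ) (z : ι → ZMod 2) :
    ∑ x : ι → ZMod 2, signChar (x ⬝ᵥ z) * ∏ i, flipProb p (x i) =
      ∏ i, if z i = 0 then 1 else 1 - 2 * p := by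
  simp_rw [dotProduct, AddChar.map_sum_eq_prod, ← prod_mul_distrib, ← sum_signChar_mul_flipProb]
  exact (Fintype.prod_sum fun i b ↦ signChar (b * z i) * flipProb p b).symm

lemma prod_ite_eq_zero_eq_pow_wt {M : Type*} [CommMonoid M] {n : ℕ} (a b : M)
    (x : Fin n → ZMod 2) :
    ∏ i, (if x i = 0 then a else b) = a ^ (n - wt x) * b ^ wt x := by
  have hcard := card_filter_add_card_filter_not (s := univ) (fun i ↦ x i = 0)
  rw [card_univ, Fintype.card_fin] at hcard
  rw [prod_ite, prod_const, prod_const, wt]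
  simp only [ne_eq]
  congr 2
  omega

lemma prod_flipProb {n : ℕ} (p : ℝ) (x : Fin n → ZMod 2) :
    ∏ i, flipProb p (x i) = (1 - p) ^ (n - wt x) * p ^ wt x :=
  prod_ite_eq_zero_eq_pow_wt _ _ x

lemma sum_signChar_dotProduct_mul_prod_flipProb_add {ι : Type*} [Fintype ι] [DecidableEq ι]
    (p : ℝ) (e z : ι → ZMod 2) :
    ∑ y : ι → ZMod 2, signChar (y ⬝ᵥ z) * ∏ i, flipProb p ((e + y) i) =
      signChar (e ⬝ᵥ z) * ∏ i, if z i = 0 then 1 else 1 - 2 * p := by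
  rw [← sum_signChar_dotProduct_mul_prod_flipProb, mul_sum]
  refine Fintype.sum_equiv (Equiv.addLeft e) _ _ fun y ↦ ?_
  rw [Equiv.coe_addLeft, add_dotProduct, AddChar.map_add_eq_mul, ← mul_assoc, ← mul_assoc,
    ← AddChar.map_add_eq_mul, CharTwo.add_self_eq_zero, AddChar.map_zero_eq_one, one_mul]

open scoped Classical in
theorem dual_code_coset_probability_general
    (n : ℕ) (C : Submodule (ZMod 2) (Fin n → ZMod 2))
    (e : Fin n → ZMod 2) (p : ℝ) :
    ∑ y ∈ Finset.univ.filter (fun y : Fin n → ZMod 2 => ∀ z ∈ C, dot y z = 0),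
        (1 - p) ^ (n - wt (e + y)) * p ^ wt (e + y)
    = (1 / (Nat.card C : ℝ)) *
        ∑ z ∈ Finset.univ.filter (fun z : Fin n → ZMod 2 => z ∈ C),
          sgn e z * (1 - 2 * p) ^ wt z := by
  have hC : (Nat.card C : ℝ) ≠ 0 := Nat.cast_ne_zero.2 Nat.card_pos.ne'
  rw [one_div, eq_inv_mul_iff_mul_eq₀ hC]
  simp only [dot_eq_dotProduct, sgn_eq_signChar]
  calc (Nat.card C : ℝ) * ∑ y ∈ univ.filter (fun y ↦ ∀ z ∈ C, y ⬝ᵥ z = 0),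
          (1 - p) ^ (n - wt (e + y)) * p ^ wt (e + y)
      = ∑ y, (∑ z ∈ univ.filter (· ∈ C), signChar (y ⬝ᵥ z)) * ∏ i, flipProb p ((e + y) i) := by
        simp only [sum_signChar_dotProduct_mem, prod_flipProb, ite_mul, zero_mul, ← sum_filter,
          mul_sum]
    _ = ∑ z ∈ univ.filter (· ∈ C), ∑ y, signChar (y ⬝ᵥ z) * ∏ i, flipProb p ((e + y) i) := by
        simp only [sum_mul]
        exact sum_comm
    _ = ∑ z ∈ univ.filter (· ∈ C), signChar (e ⬝ᵥ z) * (1 - 2 * p) ^ wt z := by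
        simp only [sum_signChar_dotProduct_mul_prod_flipProb_add, prod_ite_eq_zero_eq_pow_wt,
          one_pow, one_mul]

open scoped Classical in
/-- **Dual-code coset probabilities (MacWilliams/Fourier identity).**
For a linear code `C ⊆ F₂ⁿ`, `e ∈ F₂ⁿ` and `0 < p < 1`, the probability of the coset
`e + C^⊥` under the binary symmetric channel with crossover probability `p` equals
`(1/|C|) Σ_{z ∈ C} (−1)^{⟨e,z⟩} (1−2p)^{wt z}`. -/
theorem dual_code_coset_probability
    (n : ℕ) (C : Submodule (ZMod 2) (Fin n → ZMod 2))
    (e : Fin n → ZMod 2) (p : ℝ) (hp0 : 0 < p) (hp1 : p < 1) :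
    ∑ y ∈ Finset.univ.filter (fun y : Fin n → ZMod 2 => ∀ z ∈ C, dot y z = 0),
        (1 - p) ^ (n - wt (e + y)) * p ^ wt (e + y)
    = (1 / (Nat.card C : ℝ)) *
        ∑ z ∈ Finset.univ.filter (fun z : Fin n → ZMod 2 => z ∈ C),
          sgn e z * (1 - 2 * p) ^ wt z :=
  dual_code_coset_probability_general n C e p
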